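/- arXiv:1903.04737 — 2 statements merged into one kernel-verified Lean document; each statement's English description precedes it below -/
import Mathlib

section
/- Let A be a red–blue arrangement with exactly r red segments, let S be a non-crossing subset of A of maximum cardinality (equivalently, by the previous results, |S| = r), and let C ⊆ A be the vertex set of a connected component of the bichromatic crossing graph of A. Then S ∩ C is either exactly the set of red segments belonging to C or exactly the set of blue segments belonging to C. -/
/-- The Euclidean plane. -/
abbrev Plane : Type := EuclideanSpace ℝ (Fin 2)

/-- A segment: the closed convex hull of two distinct points of the plane. -/
structure Seg where
  p : Plane
  q : Plane
  ne : p ≠ q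

/-- The point set of a segment (the closed segment `[p, q]`). -/
def Seg.pts (s : Seg) : Set Plane := segment ℝ s.p s.q

/-- The relative interior of a segment (the open segment `(p, q)`). -/
def Seg.relint (s : Seg) : Set Plane := openSegment ℝ s.p s.q

/-- Two segments cross if their intersection is a single point lying in the
relative interior of both. -/
def Crosses (s t : Seg) : Prop :=
  ∃ x : Plane, s.pts ∩ t.pts = {x} ∧ x ∈ s.relint ∧ x ∈ t.relint

/-- A red–blue arrangement: a finite set `A` of segments, each colored red
(`red s = true`) or blue (`red s = false`), such that (1) any two distinct
segments are disjoint or cross, (2) no point lies on three or more segments,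
(3) each blue segment crosses exactly two segments, both red, (4) each red
segment crosses exactly three segments, exactly two of which are blue, and
(5) the union of the segments is a connected subset of the plane. -/
structure IsRBArrangement (A : Set Seg) (red : Seg → Bool) : Prop where
  finite : A.Finite
  disjoint_or_cross : ∀ s ∈ A, ∀ t ∈ A, s ≠ t → Disjoint s.pts t.pts ∨ Crosses s t
  no_triple : ∀ x : Plane, {s ∈ A | x ∈ s.pts}.ncard ≤ 2
  blue_cross : ∀ s ∈ A, red s = false →
    {t ∈ A | Crosses s t}.ncard = 2 ∧ ∀ t ∈ A, Crosses s t → red t = true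
  red_cross : ∀ s ∈ A, red s = true →
    {t ∈ A | Crosses s t}.ncard = 3 ∧ {t ∈ A | Crosses s t ∧ red t = false}.ncard = 2
  connected : IsConnected (⋃ s ∈ A, s.pts)

/-- A set of segments is non-crossing if no two of its segments cross. -/
def NonCrossing (S : Set Seg) : Prop := ∀ s ∈ S, ∀ t ∈ S, ¬ Crosses s t

/-- The bichromatic crossing graph of an arrangement: two segments of `A` are
adjacent exactly when they cross and have different colors. -/
def bicrossGraph (A : Set Seg) (red : Seg → Bool) : SimpleGraph Seg where
  Adj s t := s ∈ A ∧ t ∈ A ∧ Crosses s t ∧ red s ≠ red t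
  symm := by
    constructor
    rintro s t ⟨hs, ht, ⟨x, hx, h1, h2⟩, hc⟩
    exact ⟨ht, hs, ⟨x, by rwa [Set.inter_comm], h2, h1⟩, Ne.symm hc⟩
  loopless := by constructor; rintro s ⟨_, _, _, h⟩; exact h rfl

/-- `C` is the vertex set of a connected component of the bichromatic crossing
graph of the arrangement `A`. -/
def IsCompVtxSet (A : Set Seg) (red : Seg → Bool) (C : Set Seg) : Prop :=
  ∃ s ∈ A, C = {t ∈ A | (bicrossGraph A red).Reachable s t}

private lemma crosses_symm' {s t : Seg} (h : Crosses s t) : Crosses t s := by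
  obtain ⟨x, hx, h1, h2⟩ := h
  exact ⟨x, by rwa [Set.inter_comm], h2, h1⟩

private lemma EP_card {α : Type*} [DecidableEq α] (X : Finset α) (g : α → Finset α)
    (h2 : ∀ u ∈ X, (g u).card = 2) :
    (X.biUnion (fun u => (g u).image (fun v => (u, v)))).card = 2 * X.card := by
  rw [Finset.card_biUnion]
  · rw [Finset.sum_congr rfl (fun u hu => ?_), Finset.sum_const, smul_eq_mul, mul_comm]
    rw [Finset.card_image_of_injective _ (fun a b h => (Prod.ext_iff.mp h).2), h2 u hu]
  · intro u hu v hv hne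
    simp only [Finset.disjoint_left, Finset.mem_image]
    rintro p ⟨a, ha, rfl⟩ ⟨b, hb, hE⟩
    have hvu : v = u := congrArg Prod.fst hE
    exact hne hvu.symm

private lemma mem_EP {α : Type*} [DecidableEq α] (X : Finset α) (g : α → Finset α)
    (u v : α) :
    (u, v) ∈ X.biUnion (fun u => (g u).image (fun w => (u, w))) ↔ u ∈ X ∧ v ∈ g u := by
  simp only [Finset.mem_biUnion, Finset.mem_image, Prod.mk.injEq]
  constructor
  · rintro ⟨a, ha, b, hb, rfl, rfl⟩; exact ⟨ha, hb⟩
  · rintro ⟨h1, h2⟩; exact ⟨u, h1, v, h2, rfl, rfl⟩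

private lemma EP_le {α : Type*} [DecidableEq α] (X Y : Finset α) (g : α → Finset α)
    (hsymm : ∀ u v, v ∈ g u → u ∈ g v)
    (h : ∀ u ∈ X, ∀ v ∈ g u, v ∈ Y) :
    (X.biUnion (fun u => (g u).image (fun v => (u, v)))).card ≤
      (Y.biUnion (fun u => (g u).image (fun v => (u, v)))).card := by
  apply Finset.card_le_card_of_injOn Prod.swap
  · rintro ⟨u, v⟩ hp
    rw [Finset.mem_coe, mem_EP] at hp
    show (v, u) ∈ _
    rw [Finset.mem_coe, mem_EP]
    exact ⟨h u hp.1 v hp.2, hsymm u v hp.2⟩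
  · exact Function.Injective.injOn Prod.swap_injective

/-- In a red–blue arrangement, a maximum-cardinality non-crossing subset `S`
meets the vertex set `C` of each connected component of the bichromatic
crossing graph either in exactly the red segments of `C` or in exactly the
blue segments of `C`. -/
theorem max_noncrossing_monochromatic_on_components (A : Set Seg)
    (red : Seg → Bool) (hA : IsRBArrangement A red) (r : ℕ)
    (hr : {s ∈ A | red s = true}.ncard = r)
    (S : Set Seg) (hS : S ⊆ A) (hnc : NonCrossing S)
    (hmax : ∀ S' : Set Seg, S' ⊆ A → NonCrossing S' → S'.ncard ≤ S.ncard)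
    (C : Set Seg) (hC : IsCompVtxSet A red C) :
    S ∩ C = {s ∈ C | red s = true} ∨ S ∩ C = {s ∈ C | red s = false} := by
  classical
  obtain ⟨s₀, hs₀A, hCeq⟩ := hC
  set G := bicrossGraph A red with hG
  have hAdj : ∀ u v : Seg, G.Adj u v ↔ u ∈ A ∧ v ∈ A ∧ Crosses u v ∧ red u ≠ red v := by
    intro u v; rw [hG]; exact Iff.rfl
  have hmemC : ∀ t, t ∈ C ↔ t ∈ A ∧ G.Reachable s₀ t := by
    intro t; rw [hCeq]; exact Iff.rfl
  have hCA : C ⊆ A := fun t ht => ((hmemC t).1 ht).1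
  have hclose : ∀ u, u ∈ C → ∀ v, G.Adj u v → v ∈ C := by
    intro u hu v h
    exact (hmemC v).2 ⟨((hAdj u v).1 h).2.1, (((hmemC u).1 hu).2).trans h.reachable⟩
  -- Finset versions
  have hCfin : C.Finite := hA.finite.subset hCA
  set Af : Finset Seg := hA.finite.toFinset with hAf
  set Cf : Finset Seg := hCfin.toFinset with hCf
  have hmemAf : ∀ t, t ∈ Af ↔ t ∈ A := fun t => Set.Finite.mem_toFinset _
  have hmemCf : ∀ t, t ∈ Cf ↔ t ∈ C := fun t => Set.Finite.mem_toFinset _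
  set Nf : Seg → Finset Seg := fun u => Af.filter (fun v => G.Adj u v) with hNfdef
  have hNf : ∀ u v, v ∈ Nf u ↔ G.Adj u v := by
    intro u v
    rw [hNfdef]
    simp only [Finset.mem_filter, hmemAf]
    exact ⟨fun h => h.2, fun h => ⟨((hAdj u v).1 h).2.1, h⟩⟩
  -- degree two
  have hdeg : ∀ u ∈ A, (Nf u).card = 2 := by
    intro u hu
    have hcoe : (↑(Nf u) : Set Seg) = {v | G.Adj u v} := by
      ext v; simp only [Finset.coe_filter, Set.mem_setOf_eq, Finset.mem_coe, hNf]
    have hcard : (Nf u).card = {v | G.Adj u v}.ncard := by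
      rw [← Set.ncard_coe_finset, hcoe]
    rw [hcard]
    cases hru : red u with
    | false =>
        obtain ⟨h2, hall⟩ := hA.blue_cross u hu hru
        have hset : {v | G.Adj u v} = {t ∈ A | Crosses u t} := by
          ext v
          simp only [Set.mem_setOf_eq, hAdj]
          constructor
          · rintro ⟨_, hv, hc, _⟩; exact ⟨hv, hc⟩
          · rintro ⟨hv, hc⟩
            refine ⟨hu, hv, hc, ?_⟩
            rw [hru, hall v hv hc]
            exact Bool.false_ne_true
        rw [hset, h2]
    | true =>
        obtain ⟨_, h2⟩ := hA.red_cross u hu hru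
        have hset : {v | G.Adj u v} = {t ∈ A | Crosses u t ∧ red t = false} := by
          ext v
          simp only [Set.mem_setOf_eq, hAdj]
          constructor
          · rintro ⟨_, hv, hc, hne⟩
            refine ⟨hv, hc, ?_⟩
            cases hrv : red v
            · rfl
            · exact absurd (hru.trans hrv.symm) hne
          · rintro ⟨hv, hc, hrv⟩
            refine ⟨hu, hv, hc, ?_⟩
            rw [hru, hrv]
            exact Ne.symm Bool.false_ne_true
        rw [hset, h2]
  have hsymmN : ∀ u v, v ∈ Nf u → u ∈ Nf v := by
    intro u v h
    rw [hNf] at *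
    exact G.adj_symm h
  have hNfC : ∀ u, u ∈ C → ∀ v, v ∈ Nf u → v ∈ C := by
    intro u hu v hv
    exact hclose u hu v ((hNf u v).1 hv)
  set EP : Finset Seg → Finset (Seg × Seg) :=
    fun X => X.biUnion (fun u => (Nf u).image (fun v => (u, v))) with hEP
  -- blue and red parts of C
  set Bf : Finset Seg := Cf.filter (fun t => red t = false) with hBf
  set Rf : Finset Seg := Cf.filter (fun t => red t = true) with hRf
  have hBfA : ∀ u ∈ Bf, u ∈ A := by
    intro u hu; rw [hBf, Finset.mem_filter] at hu; exact hCA ((hmemCf u).1 hu.1)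
  have hRfA : ∀ u ∈ Rf, u ∈ A := by
    intro u hu; rw [hRf, Finset.mem_filter] at hu; exact hCA ((hmemCf u).1 hu.1)
  have hBtoR : ∀ u ∈ Bf, ∀ v ∈ Nf u, v ∈ Rf := by
    intro u hu v hv
    rw [hBf, Finset.mem_filter] at hu
    have hadj := (hNf u v).1 hv
    have hvC : v ∈ C := hclose u ((hmemCf u).1 hu.1) v hadj
    have hne := ((hAdj u v).1 hadj).2.2.2
    rw [hRf, Finset.mem_filter]
    refine ⟨(hmemCf v).2 hvC, ?_⟩
    cases hrv : red v
    · exact absurd (hu.2.trans hrv.symm) hne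
    · rfl
  have hRtoB : ∀ u ∈ Rf, ∀ v ∈ Nf u, v ∈ Bf := by
    intro u hu v hv
    rw [hRf, Finset.mem_filter] at hu
    have hadj := (hNf u v).1 hv
    have hvC : v ∈ C := hclose u ((hmemCf u).1 hu.1) v hadj
    have hne := ((hAdj u v).1 hadj).2.2.2
    rw [hBf, Finset.mem_filter]
    refine ⟨(hmemCf v).2 hvC, ?_⟩
    cases hrv : red v
    · rfl
    · exact absurd (hu.2.trans hrv.symm) hne
  have hEPB : (EP Bf).card = 2 * Bf.card := EP_card _ _ (fun u hu => hdeg u (hBfA u hu))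
  have hEPR : (EP Rf).card = 2 * Rf.card := EP_card _ _ (fun u hu => hdeg u (hRfA u hu))
  have hBReq : Bf.card = Rf.card := by
    have h1 := EP_le Bf Rf Nf hsymmN hBtoR
    have h2 := EP_le Rf Bf Nf hsymmN hRtoB
    rw [hEPB, hEPR] at h1 h2
    omega
  have hBRcard : Bf.card + Rf.card = Cf.card := by
    have hR' : Rf = Cf.filter (fun t => ¬ (red t = false)) := by
      rw [hRf]
      apply Finset.filter_congr
      intro t _
      cases red t <;> simp
    rw [hBf, hR']
    exact Finset.card_filter_add_card_filter_not _
  -- S within C and its complement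
  set SCf : Finset Seg := Cf.filter (fun t => t ∈ S) with hSCf
  set Tf : Finset Seg := Cf.filter (fun t => t ∉ S) with hTf
  have hSTcard : SCf.card + Tf.card = Cf.card := by
    rw [hSCf, hTf]
    exact Finset.card_filter_add_card_filter_not _
  have hSCfA : ∀ u ∈ SCf, u ∈ A := by
    intro u hu; rw [hSCf, Finset.mem_filter] at hu; exact hCA ((hmemCf u).1 hu.1)
  have hTfA : ∀ u ∈ Tf, u ∈ A := by
    intro u hu; rw [hTf, Finset.mem_filter] at hu; exact hCA ((hmemCf u).1 hu.1)
  have hStoT : ∀ u ∈ SCf, ∀ v ∈ Nf u, v ∈ Tf := by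
    intro u hu v hv
    rw [hSCf, Finset.mem_filter] at hu
    have hadj := (hNf u v).1 hv
    have hvC : v ∈ C := hclose u ((hmemCf u).1 hu.1) v hadj
    rw [hTf, Finset.mem_filter]
    refine ⟨(hmemCf v).2 hvC, fun hvS => ?_⟩
    exact hnc u hu.2 v hvS ((hAdj u v).1 hadj).2.2.1
  have hEPS : (EP SCf).card = 2 * SCf.card := EP_card _ _ (fun u hu => hdeg u (hSCfA u hu))
  have hEPT : (EP Tf).card = 2 * Tf.card := EP_card _ _ (fun u hu => hdeg u (hTfA u hu))
  have hle : SCf.card ≤ Tf.card := by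
    have h1 := EP_le SCf Tf Nf hsymmN hStoT
    rw [hEPS, hEPT] at h1
    omega
  -- translate ncards
  have hSfin : S.Finite := hA.finite.subset hS
  have hSCcoe : (↑SCf : Set Seg) = S ∩ C := by
    ext t
    simp only [Finset.coe_filter, Set.mem_setOf_eq, Set.mem_inter_iff, hSCf, Finset.mem_filter,
      hmemCf]
    tauto
  have hSCncard : (S ∩ C).ncard = SCf.card := by
    rw [← hSCcoe, Set.ncard_coe_finset]
  have hBcoe : (↑Bf : Set Seg) = {t ∈ C | red t = false} := by
    ext t
    simp only [Finset.coe_filter, Set.mem_setOf_eq, hBf, Finset.mem_filter, hmemCf]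
  have hBncard : ({t ∈ C | red t = false} : Set Seg).ncard = Bf.card := by
    rw [← hBcoe, Set.ncard_coe_finset]
  rcases lt_or_eq_of_le hle with hlt | heq
  · -- strict: replace S ∩ C by the blues of C, contradicting maximality
    exfalso
    have hBgt : SCf.card < Bf.card := by omega
    set S' : Set Seg := (S \ C) ∪ {t ∈ C | red t = false} with hS'
    have hS'A : S' ⊆ A := by
      rintro t (ht | ht)
      · exact hS ht.1
      · exact hCA ht.1
    have hnc' : NonCrossing S' := by
      rintro s (hs | hs) t (ht | ht) hcr
      · exact hnc s hs.1 t ht.1 hcr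
      · -- s ∈ S \ C, t blue in C
        have hst : red s = true := (hA.blue_cross t (hCA ht.1) ht.2).2 s (hS hs.1)
          (crosses_symm' hcr)
        have hadj : G.Adj t s := (hAdj t s).2 ⟨hCA ht.1, hS hs.1, crosses_symm' hcr, by
          rw [ht.2, hst]; exact Bool.false_ne_true⟩
        exact hs.2 (hclose t ht.1 s hadj)
      · -- s blue in C, t ∈ S \ C
        have hrt : red t = true := (hA.blue_cross s (hCA hs.1) hs.2).2 t (hS ht.1) hcr
        have hadj : G.Adj s t := (hAdj s t).2 ⟨hCA hs.1, hS ht.1, hcr, by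
          rw [hs.2, hrt]; exact Bool.false_ne_true⟩
        exact ht.2 (hclose s hs.1 t hadj)
      · -- both blue
        have hrt : red t = true := (hA.blue_cross s (hCA hs.1) hs.2).2 t (hCA ht.1) hcr
        exact Bool.false_ne_true (ht.2.symm.trans hrt)
    have hdisj : Disjoint (S \ C) ({t ∈ C | red t = false} : Set Seg) := by
      refine Set.disjoint_sdiff_left.mono_right ?_
      intro t ht; exact ht.1
    have hSsplit : S.ncard = (S \ C).ncard + SCf.card := by
      rw [← hSCncard, ← Set.ncard_union_eq (Set.disjoint_sdiff_left.mono_right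
        Set.inter_subset_right) (hSfin.diff) (hSfin.inter_of_left _), Set.diff_union_inter]
    have hS'card : S'.ncard = (S \ C).ncard + Bf.card := by
      rw [hS', Set.ncard_union_eq hdisj (hSfin.diff) (hCfin.subset (fun t ht => ht.1)),
        hBncard]
    have := hmax S' hS'A hnc'
    omega
  · -- equality: S ∩ C is a bipartition class
    have himg : (EP SCf).image Prod.swap = EP Tf := by
      apply Finset.eq_of_subset_of_card_le
      · intro p hp
        obtain ⟨⟨u, v⟩, hq, rfl⟩ := Finset.mem_image.1 hp
        rw [hEP, mem_EP] at hq
        show (v, u) ∈ EP Tf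
        rw [hEP, mem_EP]
        exact ⟨hStoT u hq.1 v hq.2, hsymmN u v hq.2⟩
      · rw [Finset.card_image_of_injective _ Prod.swap_injective, hEPS, hEPT]
        omega
    have hTS : ∀ v, v ∈ C → v ∉ S → ∀ u, G.Adj v u → u ∈ S := by
      intro v hvC hvS u hadj
      have hvT : v ∈ Tf := by
        rw [hTf, Finset.mem_filter]; exact ⟨(hmemCf v).2 hvC, hvS⟩
      have huN : u ∈ Nf v := (hNf v u).2 hadj
      have hmem : (v, u) ∈ EP Tf := by rw [hEP, mem_EP]; exact ⟨hvT, huN⟩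
      rw [← himg] at hmem
      obtain ⟨⟨a, b⟩, hq, hswap⟩ := Finset.mem_image.1 hmem
      have hb : b = v := congrArg Prod.fst hswap
      have ha : a = u := congrArg Prod.snd hswap
      rw [hEP, mem_EP] at hq
      have := hq.1
      rw [hSCf, Finset.mem_filter] at this
      rw [← ha]
      exact this.2
    obtain ⟨b₀, hbase⟩ : ∃ b : Bool, (s₀ ∈ S ↔ red s₀ = b) := by
      by_cases h : s₀ ∈ S
      · exact ⟨red s₀, iff_of_true h rfl⟩
      · exact ⟨!(red s₀), iff_of_false h (by cases red s₀ <;> simp)⟩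
    have hstep : ∀ u v, u ∈ C → G.Adj u v → ((u ∈ S ↔ red u = b₀) → (v ∈ S ↔ red v = b₀)) := by
      intro u v huC hadj hiff
      have hvC : v ∈ C := hclose u huC v hadj
      have hne : red u ≠ red v := ((hAdj u v).1 hadj).2.2.2
      by_cases hus : u ∈ S
      · have hvS : v ∉ S := fun hvS => hnc u hus v hvS ((hAdj u v).1 hadj).2.2.1
        have hub : red u = b₀ := hiff.1 hus
        constructor
        · intro h; exact absurd h hvS
        · intro h; exact absurd (hub.trans h.symm) hne
      · have hvS : v ∈ S := hTS u huC hus v hadj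
        have hub : red u ≠ b₀ := fun h => hus (hiff.2 h)
        have hvb : red v = b₀ := by
          revert hne hub
          cases hcu : red u <;> cases hcv : red v <;> cases hcb : b₀ <;> decide
        exact iff_of_true hvS hvb
    have haux : ∀ (u t : Seg) (w : G.Walk u t), u ∈ C →
        (u ∈ S ↔ red u = b₀) → (t ∈ S ↔ red t = b₀) := by
      intro u t w
      induction w with
      | nil => intro _ h; exact h
      | cons h p ih =>
          intro huC hiff
          exact ih (hclose _ huC _ h) (hstep _ _ huC h hiff)
    have hs₀C : s₀ ∈ C := (hmemC s₀).2 ⟨hs₀A, SimpleGraph.Reachable.refl s₀⟩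
    have hkey : ∀ t, t ∈ C → (t ∈ S ↔ red t = b₀) := by
      intro t htC
      obtain ⟨w⟩ := ((hmemC t).1 htC).2
      exact haux s₀ t w hs₀C hbase
    cases hb : b₀ with
    | true =>
        left
        ext t
        simp only [Set.mem_inter_iff, Set.mem_setOf_eq]
        constructor
        · rintro ⟨htS, htC⟩
          exact ⟨htC, hb ▸ (hkey t htC).1 htS⟩
        · rintro ⟨htC, hred⟩
          exact ⟨(hkey t htC).2 (by rw [hb]; exact hred), htC⟩
    | false =>
        right
        ext t
        simp only [Set.mem_inter_iff, Set.mem_setOf_eq]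
        constructor
        · rintro ⟨htS, htC⟩
          exact ⟨htC, hb ▸ (hkey t htC).1 htS⟩
        · rintro ⟨htC, hred⟩
          exact ⟨(hkey t htC).2 (by rw [hb]; exact hred), htC⟩
end

section
/- Let A be a red–blue arrangement and let C ⊆ A be the vertex set of a connected component of the bichromatic crossing graph of A. Then there exist an integer m ≥ 2 and a bijection σ : ZMod(2m) → C such that for all i, j ∈ ZMod(2m), the segments σ(i) and σ(j) are adjacent in the bichromatic crossing graph if and only if j = i + 1 or i = j + 1, and σ(i) is red if and only if the canonical representative of i in {0, 1, …, 2m − 1} is even. In particular, every connected component of the bichromatic crossing graph is a cycle of even length in which red and blue segments alternate. -/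
open Classical in
/-- The other neighbor of `v` besides `u`, in a graph where relevant vertices
have exactly two neighbors. -/
noncomputable def cycOth {V : Type*} (G : SimpleGraph V) (v u : V) : V :=
  if h : ∃ w, G.Adj v w ∧ w ≠ u ∧ ∀ x, G.Adj v x → x = u ∨ x = w then h.choose else v

/-- The walk of directed edges starting from the directed edge `(s₀, s₁)`. -/
noncomputable def cycWalk {V : Type*} (G : SimpleGraph V) (s₀ s₁ : V) : ℕ → V × V
  | 0 => (s₀, s₁)
  | n + 1 => ((cycWalk G s₀ s₁ n).2, cycOth G (cycWalk G s₀ s₁ n).2 (cycWalk G s₀ s₁ n).1)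

lemma cycle_aux {V : Type*} (G : SimpleGraph V) (red : V → Bool)
    (hbip : ∀ u v, G.Adj u v → red u ≠ red v)
    (hfin : {p : V × V | G.Adj p.1 p.2}.Finite)
    (hdeg : ∀ v u, G.Adj v u → ∃ w, G.Adj v w ∧ w ≠ u ∧ ∀ x, G.Adj v x → x = u ∨ x = w)
    (s₀ s₁ : V) (h01 : G.Adj s₀ s₁) (hred : red s₀ = true) :
    ∃ m : ℕ, 2 ≤ m ∧ ∃ σ : ZMod (2 * m) → V,
      Function.Injective σ ∧ Set.range σ = {t | G.Reachable s₀ t} ∧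
      (∀ i j, G.Adj (σ i) (σ j) ↔ (j = i + 1 ∨ i = j + 1)) ∧
      (∀ i, red (σ i) = true ↔ Even i.val) := by
  classical
  set F := cycWalk G s₀ s₁ with hFdef
  have hFs : ∀ n, F (n+1) = ((F n).2, cycOth G (F n).2 (F n).1) := fun n => rfl
  have hoth : ∀ v u, G.Adj v u → G.Adj v (cycOth G v u) ∧ cycOth G v u ≠ u ∧
      ∀ x, G.Adj v x → x = u ∨ x = cycOth G v u := by
    intro v u h
    obtain ⟨w, hw⟩ := hdeg v u h
    have hex : ∃ w, G.Adj v w ∧ w ≠ u ∧ ∀ x, G.Adj v x → x = u ∨ x = w := ⟨w, hw⟩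
    rw [cycOth]
    rw [dif_pos hex]
    exact hex.choose_spec
  have hadjF : ∀ n, G.Adj (F n).1 (F n).2 := by
    intro n; induction n with
    | zero => exact h01
    | succ n ih => rw [hFs]; exact (hoth _ _ ih.symm).1
  have hne2 : ∀ n, (F (n+1)).2 ≠ (F n).1 := by
    intro n; rw [hFs]; exact (hoth _ _ (hadjF n).symm).2.1
  have hclass : ∀ n x, G.Adj (F n).2 x → x = (F n).1 ∨ x = (F (n+1)).2 := by
    intro n x hx; rw [hFs]; exact (hoth _ _ (hadjF n).symm).2.2 x hx
  have hstepinj : ∀ m n, F (m+1) = F (n+1) → F m = F n := by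
    intro m n h
    have h2 : (F m).2 = (F n).2 := by
      have := congrArg Prod.fst h
      rwa [hFs, hFs] at this
    have hm1 : G.Adj (F n).2 (F m).1 := h2 ▸ (hadjF m).symm
    rcases hclass n _ hm1 with h1 | h1
    · exact Prod.ext h1 h2
    · exfalso
      have := hne2 m
      rw [h, ← h1] at this
      exact this rfl
  -- pigeonhole: some positive period exists
  have hexper : ∃ n, 0 < n ∧ F n = F 0 := by
    have hfin' : Finite ↥{p : V × V | G.Adj p.1 p.2} := hfin.to_subtype
    obtain ⟨i, j, hij, hFij⟩ :=
      Finite.exists_ne_map_eq_of_infinite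
        (fun n : ℕ => (⟨F n, hadjF n⟩ : ↥{p : V × V | G.Adj p.1 p.2}))
    have hFij' : F i = F j := congrArg Subtype.val hFij
    have hdesc : ∀ i d, F i = F (i + d) → F 0 = F d := by
      intro i
      induction i with
      | zero => intro d h; rwa [zero_add] at h
      | succ i ih =>
        intro d h
        apply ih
        apply hstepinj
        rwa [show i + d + 1 = i + 1 + d by omega]
    rcases Nat.lt_or_ge i j with hlt | hge
    · refine ⟨j - i, by omega, ?_⟩
      exact (hdesc i (j - i) (by rwa [show i + (j - i) = j by omega])).symm
    · have hlt : j < i := by omega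
      refine ⟨i - j, by omega, ?_⟩
      exact (hdesc j (i - j) (by rwa [show j + (i - j) = i by omega, eq_comm])).symm
  set L := Nat.find hexper with hLdef
  obtain ⟨hLpos, hLper⟩ : 0 < L ∧ F L = F 0 := Nat.find_spec hexper
  have hLmin : ∀ k, 0 < k → k < L → F k ≠ F 0 := by
    intro k h1 h2 h3
    exact Nat.find_min hexper h2 ⟨h1, h3⟩
  have hper : ∀ n, F (n + L) = F n := by
    intro n; induction n with
    | zero => rwa [zero_add]
    | succ n ih => rw [show n + 1 + L = (n + L) + 1 by omega, hFs, ih, ← hFs]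
  have hperk : ∀ n t, F (n + L * t) = F n := by
    intro n t; induction t with
    | zero => rfl
    | succ t ih => rw [show n + L * (t+1) = (n + L * t) + L by ring, hper, ih]
  have hFinj : ∀ i j, i < L → j < L → F i = F j → i = j := by
    have key : ∀ i j, i < j → j < L → F i = F j → False := by
      intro i j hij hjL h
      have hdesc : ∀ i d, F i = F (i + d) → F 0 = F d := by
        intro i
        induction i with
        | zero => intro d h; rwa [zero_add] at h
        | succ i ih =>
          intro d h
          apply ih
          apply hstepinj
          rwa [show i + d + 1 = i + 1 + d by omega]
      have := hdesc i (j - i) (by rwa [show i + (j - i) = j by omega])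
      exact hLmin (j - i) (by omega) (by omega) this.symm
    intro i j hi hj h
    rcases lt_trichotomy i j with h' | h' | h'
    · exact absurd h (by intro hh; exact key i j h' hj hh)
    · exact h'
    · exact absurd h.symm (by intro hh; exact key j i h' hi hh)
  -- the vertex walk
  set f : ℕ → V := fun n => (F n).1 with hfdef
  have hf1 : ∀ n, f (n+1) = (F n).2 := by intro n; rw [hfdef]; simp only; rw [hFs]
  have hadj : ∀ n, G.Adj (f n) (f (n+1)) := by
    intro n; rw [hf1]; exact hadjF n
  have hneq2 : ∀ n, f (n+2) ≠ f n := by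
    intro n; rw [show n+2 = (n+1)+1 by rfl, hf1]; exact hne2 n
  have hfclass : ∀ n x, G.Adj (f (n+1)) x → x = f n ∨ x = f (n+2) := by
    intro n x hx
    rw [hf1] at hx
    rcases hclass n x hx with h | h
    · exact Or.inl h
    · right; rw [show n+2 = (n+1)+1 by rfl, hf1]; exact h
  have hfper : ∀ n, f (n + L) = f n := fun n => congrArg Prod.fst (hper n)
  have hfmod : ∀ n, f (n % L) = f n := by
    intro n
    conv_rhs => rw [← Nat.mod_add_div n L]
    exact (congrArg Prod.fst (hperk (n % L) (n / L))).symm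
  have hfcong : ∀ a b, a % L = b % L → f a = f b := by
    intro a b h; rw [← hfmod a, h, hfmod b]
  -- colors alternate
  have hcol : ∀ n, (red (f n) = true ↔ Even n) := by
    intro n; induction n with
    | zero => exact iff_of_true hred Even.zero
    | succ n ih =>
      have hne := hbip _ _ (hadj n)
      have hban : red (f (n+1)) = !red (f n) := by
        cases h1 : red (f n) <;> cases h2 : red (f (n+1)) <;>
          simp [h1, h2] at hne ⊢
      rw [hban, Nat.even_add_one, ← ih]
      cases h1 : red (f n) <;> simp [h1]
  -- L is even and at least 4
  have hfL : f L = f 0 := congrArg Prod.fst hLper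
  have hLeven : Even L := (hcol L).mp (by rw [hfL]; exact hred)
  have hL1 : L ≠ 1 := by
    intro h
    rw [h] at hfL
    rw [hf1] at hfL
    have this := hfL
    exact G.ne_of_adj h01 this.symm
  have hL2 : L ≠ 2 := by
    intro h
    rw [h] at hfL
    exact hneq2 0 hfL
  obtain ⟨m', hm'⟩ := hLeven
  have hm2 : 2 ≤ m' := by omega
  have hL4 : 4 ≤ L := by omega
  haveI : NeZero L := ⟨by omega⟩
  -- σ
  set σ : ZMod L → V := fun i => f i.val with hσdef
  have hQ : ∀ (i : ZMod L) (k : ℕ), σ (i + (k : ZMod L)) = f (i.val + k) := by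
    intro i k
    apply hfcong
    have h1 : (i + (k : ZMod L)).val = (i.val + k % L) % L := by
      rw [ZMod.val_add, ZMod.val_natCast]
    rw [h1]
    simp [Nat.add_mod]
  have hσval : ∀ i : ZMod L, σ i = f i.val := fun i => rfl
  have hσ1 : ∀ i : ZMod L, σ (i + 1) = f (i.val + 1) := by
    intro i; have := hQ i 1; simpa using this
  have hσ2 : ∀ i : ZMod L, σ (i + 2) = f (i.val + 2) := by
    intro i; have := hQ i 2; simpa using this
  have hadjσ : ∀ i, G.Adj (σ i) (σ (i + 1)) := by
    intro i; rw [hσ1, hσval]; exact hadj i.val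
  have hneσ2 : ∀ i, σ (i + 2) ≠ σ i := by
    intro i; rw [hσ2, hσval]; exact hneq2 i.val
  have hclassσ : ∀ i x, G.Adj (σ i) x → x = σ (i - 1) ∨ x = σ (i + 1) := by
    intro i x hx
    have e1 : σ (i - 1 + 1) = f ((i - 1).val + 1) := hσ1 (i - 1)
    rw [sub_add_cancel] at e1
    rw [e1] at hx
    rcases hfclass (i - 1).val x hx with h | h
    · exact Or.inl (by rw [hσval]; exact h)
    · right
      have e2 : σ (i - 1 + 2) = f ((i - 1).val + 2) := hσ2 (i - 1)
      rw [show i - 1 + 2 = i + 1 by ring] at e2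
      rw [e2]; exact h
  have hEinjσ : ∀ i j : ZMod L, σ i = σ j → σ (i + 1) = σ (j + 1) → i = j := by
    intro i j h1 h2
    have hF : F i.val = F j.val := by
      apply Prod.ext
      · exact h1
      · rw [← hf1, ← hf1, ← hσ1, ← hσ1]; exact h2
    exact ZMod.val_injective L (hFinj _ _ (ZMod.val_lt i) (ZMod.val_lt j) hF)
  have hcolσ : ∀ i : ZMod L, red (σ i) = true ↔ Even i.val := fun i => hcol i.val
  -- injectivity
  have hinj : Function.Injective σ := by
    intro a b hab
    by_contra hne
    have hpar : Even a.val ↔ Even b.val := by rw [← hcolσ, ← hcolσ, hab]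
    have hrefl : ∀ k : ℕ, σ (b + (k : ZMod L)) = σ (a - (k : ZMod L)) ∧
        σ (b + ((k + 1 : ℕ) : ZMod L)) = σ (a - ((k + 1 : ℕ) : ZMod L)) := by
      intro k
      induction k with
      | zero =>
        constructor
        · simpa using hab.symm
        · have hadj1 : G.Adj (σ a) (σ (b + 1)) := by rw [hab]; exact hadjσ b
          have goal1 : σ (b + 1) = σ (a - 1) := by
            rcases hclassσ a _ hadj1 with h | h
            · exact h
            · exact absurd (hEinjσ b a hab.symm h).symm hne
          simpa using goal1
      | succ k ih =>
        obtain ⟨ih1, ih2⟩ := ih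
        refine ⟨ih2, ?_⟩
        have hadjk : G.Adj (σ (a - ((k + 1 : ℕ) : ZMod L))) (σ (b + ((k + 1 : ℕ) : ZMod L) + 1)) := by
          rw [← ih2]; exact hadjσ (b + ((k + 1 : ℕ) : ZMod L))
        rcases hclassσ (a - ((k + 1 : ℕ) : ZMod L)) _ hadjk with h | h
        · rw [show (((k + 1 + 1 : ℕ)) : ZMod L) = ((k + 1 : ℕ) : ZMod L) + 1 by push_cast; ring,
             show a - (((k + 1 : ℕ) : ZMod L) + 1) = a - ((k + 1 : ℕ) : ZMod L) - 1 by ring,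
             show b + (((k + 1 : ℕ) : ZMod L) + 1) = b + ((k + 1 : ℕ) : ZMod L) + 1 by ring]
          exact h
        · exfalso
          have h' : σ (b + ((k + 1 : ℕ) : ZMod L) + 1) = σ (b + ((k : ℕ) : ZMod L)) := by
            rw [h, show a - ((k + 1 : ℕ) : ZMod L) + 1 = a - ((k : ℕ) : ZMod L) by push_cast; ring,
              ← ih1]
          have h2 := hneσ2 (b + ((k : ℕ) : ZMod L))
          rw [show b + ((k : ℕ) : ZMod L) + 2 = b + ((k + 1 : ℕ) : ZMod L) + 1 by push_cast; ring] at h2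
          exact h2 h'
    have hP : ∀ k : ℕ, σ (b + (k : ZMod L)) = σ (a - (k : ZMod L)) := fun k => (hrefl k).1
    have hpar' : a.val % 2 = b.val % 2 := by
      rw [Nat.even_iff, Nat.even_iff] at hpar; omega
    have hLmod : L % 2 = 0 := by omega
    have hblt : b.val < L := ZMod.val_lt b
    have hble : b.val ≤ a.val + L := by omega
    set D := a.val + L - b.val with hDdef
    set k := D / 2 with hkdef
    have hkk : k + k = D := by omega
    have hcastD : ((D : ℕ) : ZMod L) = a - b := by
      rw [hDdef, Nat.cast_sub hble]
      push_cast
      simp [ZMod.natCast_val, ZMod.cast_id, ZMod.natCast_self]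
    have hkk' : ((k : ℕ) : ZMod L) + ((k : ℕ) : ZMod L) = a - b := by
      rw [← hcastD, ← hkk]; push_cast; ring
    set n := b + ((k : ℕ) : ZMod L) with hndef
    have hcast : n = a - ((k : ℕ) : ZMod L) := by
      rw [hndef, eq_sub_iff_add_eq, add_assoc, hkk']; ring
    have hfinal : σ (n + 1) = σ (n - 1) := by
      have hp := hP (k + 1)
      rw [show ((k + 1 : ℕ) : ZMod L) = ((k : ℕ) : ZMod L) + 1 by push_cast; ring] at hp
      rw [show b + (((k : ℕ) : ZMod L) + 1) = n + 1 by rw [hndef]; ring] at hp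
      rw [show a - (((k : ℕ) : ZMod L) + 1) = n - 1 by rw [hcast]; ring] at hp
      exact hp
    have hcontra := hneσ2 (n - 1)
    rw [show n - 1 + 2 = n + 1 by ring] at hcontra
    exact hcontra hfinal
  -- range
  have hreach : ∀ n : ℕ, G.Reachable s₀ (f n) := by
    intro n; induction n with
    | zero => exact SimpleGraph.Reachable.refl s₀
    | succ n ih => exact ih.trans (hadj n).reachable
  have hrange : Set.range σ = {t | G.Reachable s₀ t} := by
    ext t
    constructor
    · rintro ⟨i, rfl⟩; exact hreach i.val
    · intro ht
      have hkey : ∀ t u : V, G.Walk t u → u ∈ Set.range σ → t ∈ Set.range σ := by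
        intro t u w
        induction w with
        | nil => exact id
        | @cons x y _ h p ih =>
          intro hu
          obtain ⟨i, hi⟩ := ih hu
          have hx : G.Adj (σ i) x := by rw [hi]; exact h.symm
          rcases hclassσ i x hx with h' | h'
          · exact ⟨i - 1, h'.symm⟩
          · exact ⟨i + 1, h'.symm⟩
      obtain ⟨w⟩ := (ht : G.Reachable s₀ t).symm
      refine hkey t s₀ w ⟨0, ?_⟩
      rw [hσval, ZMod.val_zero]
      rfl
  -- adjacency characterization
  have hiff : ∀ i j : ZMod L, G.Adj (σ i) (σ j) ↔ (j = i + 1 ∨ i = j + 1) := by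
    intro i j
    constructor
    · intro h
      rcases hclassσ i _ h with h' | h'
      · right
        have h2 := hinj h'
        rw [h2]; ring
      · left; exact hinj h'
    · rintro (h | h)
      · subst h; exact hadjσ i
      · subst h; exact (hadjσ j).symm
  refine ⟨m', hm2, ?_⟩
  have hLm : 2 * m' = L := by omega
  rw [hLm]
  exact ⟨σ, hinj, hrange, hiff, hcolσ⟩

/-- Every connected component of the bichromatic crossing graph of a red–blue
arrangement is a cycle of even length `2m` (with `m ≥ 2`) in which red and
blue segments alternate. -/
theorem component_is_alternating_even_cycle (A : Set Seg) (red : Seg → Bool)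
    (hA : IsRBArrangement A red) (C : Set Seg)
    (hC : IsCompVtxSet A red C) :
    ∃ m : ℕ, 2 ≤ m ∧ ∃ σ : ZMod (2 * m) → Seg,
      Function.Injective σ ∧ Set.range σ = C ∧
      (∀ i j : ZMod (2 * m),
        (bicrossGraph A red).Adj (σ i) (σ j) ↔ (j = i + 1 ∨ i = j + 1)) ∧
      (∀ i : ZMod (2 * m), red (σ i) = true ↔ Even i.val) := by
  classical
  obtain ⟨s, hsA, hCeq⟩ := hC
  set G := bicrossGraph A red with hG
  have hbip : ∀ u v, G.Adj u v → red u ≠ red v := fun u v h => h.2.2.2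
  have hdeg2 : ∀ v ∈ A, {x | G.Adj v x}.ncard = 2 := by
    intro v hv
    cases hrv : red v with
    | false =>
      obtain ⟨h2, hall⟩ := hA.blue_cross v hv hrv
      have hEq : {x | G.Adj v x} = {t ∈ A | Crosses v t} := by
        ext x
        constructor
        · rintro ⟨_, hxA, hcr, _⟩; exact ⟨hxA, hcr⟩
        · rintro ⟨hxA, hcr⟩
          refine ⟨hv, hxA, hcr, ?_⟩
          rw [hrv, hall x hxA hcr]; simp
      rw [hEq]; exact h2
    | true =>
      obtain ⟨_, h2⟩ := hA.red_cross v hv hrv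
      have hEq : {x | G.Adj v x} = {t ∈ A | Crosses v t ∧ red t = false} := by
        ext x
        constructor
        · rintro ⟨_, hxA, hcr, hne⟩
          refine ⟨hxA, hcr, ?_⟩
          rw [hrv] at hne
          exact Bool.eq_false_iff.mpr (Ne.symm hne)
        · rintro ⟨hxA, hcr, hrx⟩
          exact ⟨hv, hxA, hcr, by rw [hrv, hrx]; simp⟩
      rw [hEq]; exact h2
  have hdeg : ∀ v u, G.Adj v u → ∃ w, G.Adj v w ∧ w ≠ u ∧
      ∀ x, G.Adj v x → x = u ∨ x = w := by
    intro v u h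
    obtain ⟨a, b, hab, hset⟩ := Set.ncard_eq_two.mp (hdeg2 v h.1)
    have ha : G.Adj v a := by
      have : a ∈ {x | G.Adj v x} := by rw [hset]; exact Set.mem_insert a {b}
      exact this
    have hb : G.Adj v b := by
      have : b ∈ {x | G.Adj v x} := by
        rw [hset]; exact Set.mem_insert_of_mem a rfl
      exact this
    have hcl : ∀ x, G.Adj v x → x = a ∨ x = b := by
      intro x hx
      have : x ∈ ({a, b} : Set Seg) := by rw [← hset]; exact hx
      simpa using this
    have hu : u ∈ ({a, b} : Set Seg) := by rw [← hset]; exact h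
    rcases (by simpa using hu : u = a ∨ u = b) with rfl | rfl
    · exact ⟨b, hb, hab.symm, fun x hx => (hcl x hx)⟩
    · refine ⟨a, ha, hab, fun x hx => ?_⟩
      rcases hcl x hx with h' | h'
      · exact Or.inr h'
      · exact Or.inl h'
  have hfin : {p : Seg × Seg | G.Adj p.1 p.2}.Finite := by
    apply Set.Finite.subset (hA.finite.prod hA.finite)
    rintro ⟨x, y⟩ hxy
    exact ⟨hxy.1, hxy.2.1⟩
  have hnbr : ∃ u, G.Adj s u := by
    have h2 := hdeg2 s hsA
    have h3 : {x | G.Adj s x}.Nonempty :=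
      Set.nonempty_of_ncard_ne_zero (by rw [h2]; omega)
    obtain ⟨u, hu⟩ := h3
    exact ⟨u, hu⟩
  obtain ⟨u, hu⟩ := hnbr
  obtain ⟨s₀, s₁, h01, hred, hreach0, hs₀A⟩ :
      ∃ s₀ s₁, G.Adj s₀ s₁ ∧ red s₀ = true ∧ G.Reachable s s₀ ∧ s₀ ∈ A := by
    cases hrs : red s with
    | true => exact ⟨s, u, hu, hrs, SimpleGraph.Reachable.refl s, hsA⟩
    | false =>
      refine ⟨u, s, hu.symm, ?_, hu.reachable, hu.2.1⟩
      have hne := hbip s u hu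
      rw [hrs] at hne
      cases h : red u
      · exact absurd h.symm hne
      · rfl
  have hAcl : ∀ x y : Seg, G.Walk x y → x ∈ A → y ∈ A := by
    intro x y w
    induction w with
    | nil => exact id
    | cons h p ih => intro _; exact ih h.2.1
  obtain ⟨m, hm, σ, hinj, hrange, hiff, hcolσ⟩ :=
    cycle_aux G red hbip hfin hdeg s₀ s₁ h01 hred
  refine ⟨m, hm, σ, hinj, ?_, hiff, hcolσ⟩
  rw [hrange, hCeq]
  ext t
  constructor
  · intro ht
    refine ⟨?_, hreach0.trans ht⟩
    obtain ⟨w⟩ := (ht : G.Reachable s₀ t)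
    exact hAcl s₀ t w hs₀A
  · rintro ⟨htA, ht⟩
    exact hreach0.symm.trans ht
end
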